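/- Suppose n ≥ 3 and let ℓ ≥ 1 be an integer. Let M′ = (x_{ij} : 1 ≤ i ≤ m, 1 ≤ j ≤ n−1) be the ideal of R generated by the entries of the first n−1 columns and 𝔮 = (x_{1n}, …, x_{mn}) the ideal generated by the entries of the last column. Then μ_R(M·Q^ℓ) = μ_R(M′·Q^ℓ) + μ_R(𝔮·Q^ℓ). -/

import Mathlib

set_option synthInstance.maxHeartbeats 1000000

noncomputable section

open MvPolynomial

/-- The minimal number of generators of an ideal `I`, i.e. the least cardinality of a
finite generating set of `I`. -/
def idealMu {A : Type*} [CommRing A] (I : Ideal A) : ℕ :=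
  sInf {c : ℕ | ∃ s : Finset A, s.card = c ∧ Ideal.span (s : Set A) = I}

variable (k : Type*) [Field k] (m n : ℕ)

/-- The ideal `I₂(X)` of `2 × 2` minors of the generic `m × n` matrix
`X = (X_{ij})` in the polynomial ring `S = k[X_{ij}]`. -/
def detIdeal : Ideal (MvPolynomial (Fin m × Fin n) k) :=
  Ideal.span {f | ∃ (i₁ i₂ : Fin m) (j₁ j₂ : Fin n), i₁ < i₂ ∧ j₁ < j₂ ∧
    f = X (i₁, j₁) * X (i₂, j₂) - X (i₁, j₂) * X (i₂, j₁)}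

/-- The determinantal ring `R = S/I₂(X)`. -/
abbrev DetRing := MvPolynomial (Fin m × Fin n) k ⧸ detIdeal k m n

/-- `x_{ij}`, the image of `X_{ij}` in `R`. -/
def xbar (i : Fin m) (j : Fin n) : DetRing k m n :=
  Ideal.Quotient.mk _ (X (i, j))

/-- The graded maximal ideal `M = R₊`, generated by all the `x_{ij}`. -/
def maxIdeal : Ideal (DetRing k m n) :=
  Ideal.span (Set.range fun p : Fin m × Fin n => xbar k m n p.1 p.2)

/-- The ideal `Q = (x_{11}, x_{21}, …, x_{m1})` generated by the entries of the
first column of `X`. -/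
def colIdeal : Ideal (DetRing k m n) :=
  Ideal.span {y | ∃ (i : Fin m) (j : Fin n), (j : ℕ) = 0 ∧ y = xbar k m n i j}

/-- The ideal `M′ = (x_{ij} : 1 ≤ i ≤ m, 1 ≤ j ≤ n−1)` generated by the entries of
the first `n−1` columns of `X`. -/
def maxIdeal' : Ideal (DetRing k m n) :=
  Ideal.span {y | ∃ (i : Fin m) (j : Fin n), (j : ℕ) < n - 1 ∧ y = xbar k m n i j}

/-- The ideal `𝔮 = (x_{1n}, …, x_{mn})` generated by the entries of the last
column of `X`. -/
def lastColIdeal : Ideal (DetRing k m n) :=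
  Ideal.span {y | ∃ (i : Fin m) (j : Fin n), (j : ℕ) = n - 1 ∧ y = xbar k m n i j}

/-!
Write `Q_c` for the ideal of the `c`-th column and `I_J = (x_{ij} : j ∈ J)` for a set `J` of
columns. Since all `2 × 2` minors vanish, a row index can be moved from one column to another:
`x_{aj} x_{bc} = x_{ac} x_{bj}`. Hence `I_J Q_c^ℓ` is generated by the products
`x_{aj} ∏_{i ∈ s} x_{ic}` with `j ∈ J`, which only depend on `j` and the multiset `a + s` of
`ℓ + 1` rows, giving `μ(I_J Q_c^ℓ) ≤ |J| · multichoose m (ℓ + 1)`.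

For the reverse inequality, the Segre map `x_{ij} ↦ Y_i Z_j` sends these generators to pairwise
distinct monomials of degree `2ℓ + 2`. Reading off the coefficients of these monomials gives an
additive map `Λ` with `Λ(r g) = ε(r) Λ(g)` for `g` in the ideal, where `ε(r)` is the constant term
of the Segre image of `r`: all the monomials have the same degree. So the values of `Λ` on any
generating set span `Λ` of the whole ideal, which is `k^{Sym (Fin m) (ℓ+1) × J}`.
Thus `μ(I_J Q_c^ℓ) = |J| · multichoose m (ℓ + 1)`, which is additive in `J`. The theorem follows
by splitting the columns into the first `n - 1` and the last one.
-/

section idealMu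

variable {A : Type*} [CommRing A]

theorem idealMu_span_range_le {ι : Type*} [Fintype ι] (f : ι → A) :
    idealMu (Ideal.span (Set.range f)) ≤ Fintype.card ι := by
  classical
  calc idealMu (Ideal.span (Set.range f))
      = idealMu (Ideal.span ((Finset.univ.image f : Finset A) : Set A)) := by
        rw [Finset.coe_image, Finset.coe_univ, Set.image_univ]
    _ ≤ (Finset.univ.image f).card := Nat.sInf_le ⟨_, rfl, rfl⟩
    _ ≤ Fintype.card ι := Finset.card_image_le

theorem exists_finset_card_eq_idealMu {I : Ideal A} (hI : I.FG) :
    ∃ s : Finset A, s.card = idealMu I ∧ Ideal.span (s : Set A) = I :=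
  have ⟨s, hs⟩ := hI
  Nat.sInf_mem (s := {c | ∃ s : Finset A, s.card = c ∧ Ideal.span (s : Set A) = I})
    ⟨s.card, s, rfl, hs⟩

variable {k V : Type*} [Field k] [AddCommGroup V] [Module k V]

theorem map_mul_eq_smul_of_mem_span {S : Set A} (ε : A →+* k) (Λ : A →+ V)
    (hΛ : ∀ r, ∀ g ∈ S, Λ (r * g) = ε r • Λ g) {x : A} (hx : x ∈ Ideal.span S) (r : A) :
    Λ (r * x) = ε r • Λ x := by
  induction hx using Submodule.span_induction generalizing r with
  | mem g hg => exact hΛ r g hg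
  | zero => simp
  | add y z _ _ hy hz => rw [mul_add, map_add, map_add, hy, hz, smul_add]
  | smul a y _ hy => rw [smul_eq_mul, ← mul_assoc, hy, hy, map_mul, mul_smul]

theorem finrank_span_image_le_idealMu {S : Set A} (hS : S.Finite) (ε : A →+* k) (Λ : A →+ V)
    (hΛ : ∀ r, ∀ g ∈ S, Λ (r * g) = ε r • Λ g) :
    Module.finrank k (Submodule.span k (Λ '' S)) ≤ idealMu (Ideal.span S) := by
  classical
  obtain ⟨s, hcard, hs⟩ :=
    exists_finset_card_eq_idealMu (I := Ideal.span S) (Submodule.fg_span hS)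
  have hmem : ∀ x ∈ Ideal.span (s : Set A), Λ x ∈ Submodule.span k (Λ '' (s : Set A)) := by
    intro x hx
    induction hx using Submodule.span_induction with
    | mem g hg => exact Submodule.subset_span ⟨g, hg, rfl⟩
    | zero => simp
    | add y z _ _ hy hz => rw [map_add]; exact add_mem hy hz
    | smul a y hy hyΛ =>
      rw [smul_eq_mul, map_mul_eq_smul_of_mem_span ε Λ hΛ (by rwa [← hs])]
      exact Submodule.smul_mem _ _ hyΛ
  have hle : Submodule.span k (Λ '' S) ≤ Submodule.span k (s.image Λ : Set V) := by
    rw [Submodule.span_le, Finset.coe_image]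
    rintro _ ⟨g, hg, rfl⟩
    exact hmem g (hs ▸ Ideal.subset_span hg)
  calc Module.finrank k (Submodule.span k (Λ '' S))
      ≤ Module.finrank k (Submodule.span k (s.image Λ : Set V)) := Submodule.finrank_mono hle
    _ ≤ (s.image Λ).card := finrank_span_finset_le_card _
    _ ≤ idealMu (Ideal.span S) := hcard ▸ Finset.card_image_le

end idealMu

theorem Sym.cons_surjective {α : Type*} {ℓ : ℕ} :
    Function.Surjective fun p : α × Sym α ℓ => p.1 ::ₛ p.2 := fun u => by
  obtain ⟨a, s, rfl⟩ := u.exists_eq_cons_of_succ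
  exact ⟨(a, s), rfl⟩

theorem Multiset.disjSum_injective {α β : Type*} {s s' : Multiset α} {t t' : Multiset β}
    (h : s.disjSum t = s'.disjSum t') : s = s' ∧ t = t' := by
  classical
  constructor <;> ext x
  · simpa [Multiset.disjSum, Multiset.count_map_eq_count' _ _ Sum.inl_injective] using
      congr_arg (Multiset.count (Sum.inl x)) h
  · simpa [Multiset.disjSum, Multiset.count_map_eq_count' _ _ Sum.inr_injective] using
      congr_arg (Multiset.count (Sum.inr x)) h

theorem Multiset.degree_toFinsupp {α : Type*} [DecidableEq α] (s : Multiset α) :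
    (Multiset.toFinsupp s).degree = Multiset.card s :=
  Multiset.toFinsupp_sum_eq s

namespace MvPolynomial

variable {σ R : Type*} [CommSemiring R]

theorem prod_map_X_eq_monomial [DecidableEq σ] (s : Multiset σ) :
    (s.map (X : σ → MvPolynomial σ R)).prod = monomial (Multiset.toFinsupp s) 1 := by
  induction s using Multiset.induction with
  | empty => simp
  | cons a s ih =>
    rw [Multiset.map_cons, Multiset.prod_cons, ih, X, monomial_mul, one_mul,
      ← Multiset.singleton_add, map_add, Multiset.toFinsupp_singleton]

theorem coeff_mul_monomial_of_degree_eq (p : MvPolynomial σ R) {d e : σ →₀ ℕ}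
    (h : d.degree = e.degree) :
    coeff d (p * monomial e 1) = constantCoeff p * coeff d (monomial e 1) := by
  classical
  rw [coeff_mul_monomial', coeff_monomial]
  by_cases hed : e = d
  · simp [hed, constantCoeff_eq]
  · have hle : ¬ e ≤ d := fun hle => hed <| by
      obtain ⟨f, rfl⟩ := exists_add_of_le hle
      rw [map_add, add_eq_left, Finsupp.degree_eq_zero_iff] at h
      simp [h]
    simp [hle, hed]

end MvPolynomial

section DetRing

variable {k : Type*} [Field k] {m n : ℕ}

theorem xbar_mul_xbar_of_lt {i i' : Fin m} {j j' : Fin n} (hi : i < i') (hj : j < j') :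
    xbar k m n i j * xbar k m n i' j' = xbar k m n i j' * xbar k m n i' j := by
  simp only [xbar, ← map_mul, Ideal.Quotient.eq]
  exact Ideal.subset_span ⟨i, i', j, j', hi, hj, rfl⟩

theorem xbar_mul_xbar_swap (i i' : Fin m) (j j' : Fin n) :
    xbar k m n i j * xbar k m n i' j' = xbar k m n i j' * xbar k m n i' j := by
  rcases lt_trichotomy i i' with hi | rfl | hi
  · rcases lt_trichotomy j j' with hj | rfl | hj
    · exact xbar_mul_xbar_of_lt hi hj
    · rfl
    · exact (xbar_mul_xbar_of_lt hi hj).symm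
  · ring
  · rcases lt_trichotomy j j' with hj | rfl | hj
    · linear_combination -xbar_mul_xbar_of_lt (k := k) hi hj
    · rfl
    · linear_combination xbar_mul_xbar_of_lt (k := k) hi hj

variable (k) in
def colProd (c : Fin n) (s : Multiset (Fin m)) : DetRing k m n :=
  (s.map (xbar k m n · c)).prod

@[simp]
theorem colProd_cons (c : Fin n) (a : Fin m) (s : Multiset (Fin m)) :
    colProd k c (a ::ₘ s) = xbar k m n a c * colProd k c s := by
  simp [colProd]

theorem xbar_mul_colProd_eq_of_cons_eq (j c : Fin n) {a a' : Fin m}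
    {s s' : Multiset (Fin m)} (h : a ::ₘ s = a' ::ₘ s') :
    xbar k m n a j * colProd k c s = xbar k m n a' j * colProd k c s' := by
  rcases Multiset.cons_eq_cons.mp h with ⟨rfl, rfl⟩ | ⟨-, t, rfl, rfl⟩
  · rfl
  · rw [colProd_cons, colProd_cons, ← mul_assoc, ← mul_assoc, xbar_mul_xbar_swap,
      mul_comm (xbar k m n a c)]

variable (k) in
/-- `x_{aj} ∏_{i ∈ s} x_{ic}` for an arbitrary decomposition `u = a ::ₛ s`; by `symGen_cons`
the choice does not matter. -/
def symGen {ℓ : ℕ} (c j : Fin n) (u : Sym (Fin m) (ℓ + 1)) : DetRing k m n :=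
  let p := Function.surjInv Sym.cons_surjective u
  xbar k m n p.1 j * colProd k c p.2

theorem symGen_cons {ℓ : ℕ} (c j : Fin n) (a : Fin m) (s : Sym (Fin m) ℓ) :
    symGen k c j (a ::ₛ s) = xbar k m n a j * colProd k c s := by
  refine xbar_mul_colProd_eq_of_cons_eq j c ?_
  rw [← Sym.coe_cons, ← Sym.coe_cons]
  exact congr_arg _ (Function.surjInv_eq Sym.cons_surjective (a ::ₛ s))

variable (k m n) in
def colsIdeal (J : Set (Fin n)) : Ideal (DetRing k m n) :=
  Ideal.span {y | ∃ (i : Fin m) (j : Fin n), j ∈ J ∧ y = xbar k m n i j}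

theorem colsIdeal_singleton_pow (c : Fin n) (ℓ : ℕ) :
    colsIdeal k m n {c} ^ ℓ = Ideal.span (Set.range fun s : Sym (Fin m) ℓ => colProd k c s) := by
  induction ℓ with
  | zero =>
    rw [Submodule.pow_zero, Ideal.one_eq_top, Set.range_unique, eq_comm,
      Ideal.span_singleton_eq_top]
    simp [colProd, Sym.eq_nil_of_card_zero]
  | succ ℓ ih =>
    rw [Submodule.pow_succ, ih, colsIdeal, Ideal.span_mul_span']
    congr 1
    ext y
    constructor
    · rintro ⟨_, ⟨s, rfl⟩, _, ⟨a, j, rfl, rfl⟩, rfl⟩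
      exact ⟨a ::ₛ s, by simp only [Sym.coe_cons, colProd_cons, mul_comm]⟩
    · rintro ⟨u, rfl⟩
      obtain ⟨a, s, rfl⟩ := u.exists_eq_cons_of_succ
      exact ⟨_, ⟨s, rfl⟩, _, ⟨a, c, rfl, rfl⟩, by simp only [Sym.coe_cons, colProd_cons, mul_comm]⟩

theorem colsIdeal_mul_colsIdeal_singleton_pow (J : Set (Fin n)) (c : Fin n) (ℓ : ℕ) :
    colsIdeal k m n J * colsIdeal k m n {c} ^ ℓ =
      Ideal.span (Set.range fun w : Sym (Fin m) (ℓ + 1) × J => symGen k c w.2 w.1) := by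
  rw [colsIdeal_singleton_pow, colsIdeal, Ideal.span_mul_span']
  congr 1
  ext y
  constructor
  · rintro ⟨_, ⟨a, j, hj, rfl⟩, _, ⟨s, rfl⟩, rfl⟩
    exact ⟨(a ::ₛ s, ⟨j, hj⟩), symGen_cons c j a s⟩
  · rintro ⟨⟨u, j, hj⟩, rfl⟩
    obtain ⟨a, s, rfl⟩ := u.exists_eq_cons_of_succ
    exact ⟨_, ⟨a, j, hj, rfl⟩, _, ⟨s, rfl⟩, (symGen_cons c j a s).symm⟩

variable (k m n) in
def segre : DetRing k m n →ₐ[k] MvPolynomial (Fin m ⊕ Fin n) k :=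
  Ideal.Quotient.liftₐ _ (aeval fun p => X (Sum.inl p.1) * X (Sum.inr p.2)) fun a ha => by
    refine RingHom.mem_ker.mp ((Ideal.span_le.mpr ?_ : detIdeal k m n ≤ RingHom.ker _) ha)
    rintro _ ⟨i₁, i₂, j₁, j₂, -, -, rfl⟩
    simp only [SetLike.mem_coe, RingHom.mem_ker, map_sub, map_mul, aeval_X]
    ring

@[simp]
theorem segre_xbar (i : Fin m) (j : Fin n) :
    segre k m n (xbar k m n i j) = X (Sum.inl i) * X (Sum.inr j) := by
  rw [segre, xbar, ← Ideal.Quotient.mkₐ_eq_mk k, ← AlgHom.comp_apply, Ideal.Quotient.liftₐ_comp,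
    aeval_X]

def segreExp {ℓ : ℕ} (c j : Fin n) (u : Sym (Fin m) (ℓ + 1)) : Fin m ⊕ Fin n →₀ ℕ :=
  Multiset.toFinsupp ((u : Multiset (Fin m)).disjSum (j ::ₘ Multiset.replicate ℓ c))

theorem segre_symGen {ℓ : ℕ} (c j : Fin n) (u : Sym (Fin m) (ℓ + 1)) :
    segre k m n (symGen k c j u) = monomial (segreExp c j u) 1 := by
  obtain ⟨a, s, rfl⟩ := u.exists_eq_cons_of_succ
  rw [symGen_cons, segreExp, ← prod_map_X_eq_monomial, map_mul, colProd, map_multiset_prod,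
    Multiset.map_map]
  simp [Multiset.disjSum, Multiset.prod_map_mul, Sym.coe_cons]
  ring

theorem degree_segreExp {ℓ : ℕ} (c j : Fin n) (u : Sym (Fin m) (ℓ + 1)) :
    (segreExp c j u).degree = 2 * ℓ + 2 := by
  rw [segreExp, Multiset.degree_toFinsupp, Multiset.card_disjSum]
  simp
  omega

theorem segreExp_injective {ℓ : ℕ} (c : Fin n) :
    Function.Injective fun w : Sym (Fin m) (ℓ + 1) × Fin n => segreExp c w.2 w.1 := by
  rintro ⟨u, j⟩ ⟨u', j'⟩ h
  obtain ⟨hu, hj⟩ := Multiset.disjSum_injective (Multiset.toFinsupp.injective h)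
  exact Prod.ext (Sym.coe_injective hu) ((Multiset.cons_inj_left _).mp hj)

variable (k) in
def segreCoeffs (c : Fin n) (J : Set (Fin n)) (ℓ : ℕ) :
    DetRing k m n →+ (Sym (Fin m) (ℓ + 1) × J → k) :=
  AddMonoidHom.mk' (fun x w => coeff (segreExp c w.2 w.1) (segre k m n x))
    fun x y => by ext; simp

theorem segreCoeffs_symGen (c : Fin n) (J : Set (Fin n)) {ℓ : ℕ}
    (w : Sym (Fin m) (ℓ + 1) × J) :
    segreCoeffs k c J ℓ (symGen k c w.2 w.1) = Pi.single w 1 := by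
  classical
  ext w'
  simp only [segreCoeffs, AddMonoidHom.mk'_apply, segre_symGen, coeff_monomial, Pi.single_apply]
  refine if_congr ⟨fun h => ?_, fun h => h ▸ rfl⟩ rfl rfl
  obtain ⟨hu, hj⟩ :=
    Prod.ext_iff.mp (segreExp_injective c (a₁ := (w.1, w.2)) (a₂ := (w'.1, w'.2)) h)
  exact Prod.ext hu.symm (Subtype.ext hj.symm)

theorem segreCoeffs_mul_symGen (c : Fin n) (J : Set (Fin n)) {ℓ : ℕ} (r : DetRing k m n)
    (w : Sym (Fin m) (ℓ + 1) × J) :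
    segreCoeffs k c J ℓ (r * symGen k c w.2 w.1) =
      constantCoeff (segre k m n r) • segreCoeffs k c J ℓ (symGen k c w.2 w.1) := by
  ext w'
  simp only [segreCoeffs, AddMonoidHom.mk'_apply, map_mul, segre_symGen, Pi.smul_apply,
    smul_eq_mul]
  exact coeff_mul_monomial_of_degree_eq _ (by rw [degree_segreExp, degree_segreExp])

theorem idealMu_colsIdeal_mul_colsIdeal_singleton_pow (J : Finset (Fin n)) (c : Fin n) (ℓ : ℕ) :
    idealMu (colsIdeal k m n J * colsIdeal k m n {c} ^ ℓ) = J.card * m.multichoose (ℓ + 1) := by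
  classical
  set W := Sym (Fin m) (ℓ + 1) × (J : Set (Fin n))
  have hW : Fintype.card W = J.card * m.multichoose (ℓ + 1) := by
    simp [W, Sym.card_sym_eq_multichoose, mul_comm]
  let gen : W → DetRing k m n := fun w => symGen k c w.2 w.1
  rw [colsIdeal_mul_colsIdeal_singleton_pow]
  refine le_antisymm (hW ▸ idealMu_span_range_le gen) ?_
  have hbasis : segreCoeffs k c J ℓ ∘ gen = Pi.basisFun k W :=
    funext fun w => (segreCoeffs_symGen c _ w).trans (by simp)
  have hspan : Submodule.span k (segreCoeffs k c J ℓ '' Set.range gen) = ⊤ := by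
    rw [← Set.range_comp, hbasis, Module.Basis.span_eq]
  have := finrank_span_image_le_idealMu (Set.finite_range gen)
    (constantCoeff.comp (segre k m n : DetRing k m n →+* _)) (segreCoeffs k c J ℓ)
    (by rintro r _ ⟨w, rfl⟩; exact segreCoeffs_mul_symGen c J r w)
  rwa [hspan, finrank_top, Module.finrank_fintype_fun_eq_card, hW] at this

end DetRing

theorem stmt_4 (hn : 3 ≤ n) (ℓ : ℕ) :
    idealMu (maxIdeal k m n * colIdeal k m n ^ ℓ) =
      idealMu (maxIdeal' k m n * colIdeal k m n ^ ℓ) +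
        idealMu (lastColIdeal k m n * colIdeal k m n ^ ℓ) := by
  classical
  have hQ : colIdeal k m n = colsIdeal k m n {⟨0, by omega⟩} := by
    simp only [colIdeal, colsIdeal, Set.mem_singleton_iff, Fin.ext_iff]
  have hM : maxIdeal k m n = colsIdeal k m n (Finset.univ : Finset (Fin n)) := by
    rw [maxIdeal, colsIdeal]
    congr 1
    ext y
    simp [eq_comm]
  have hM' : maxIdeal' k m n =
      colsIdeal k m n (Finset.univ.filter fun j : Fin n => (j : ℕ) < n - 1) := by
    simp [maxIdeal', colsIdeal]
  have hq : lastColIdeal k m n =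
      colsIdeal k m n (Finset.univ.filter fun j : Fin n => ¬ (j : ℕ) < n - 1) := by
    rw [lastColIdeal, colsIdeal]
    congr 1
    ext y
    simp only [Set.mem_ofPred_eq, Finset.coe_filter, Finset.mem_univ, true_and]
    exact exists_congr fun i => exists_congr fun j => and_congr_left' (by omega)
  rw [hQ, hM, hM', hq, idealMu_colsIdeal_mul_colsIdeal_singleton_pow,
    idealMu_colsIdeal_mul_colsIdeal_singleton_pow, idealMu_colsIdeal_mul_colsIdeal_singleton_pow,
    ← add_mul, Finset.card_filter_add_card_filter_not]
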